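/- Fix a finite monoid M and a bound h. There exists a constant B, depending only on h and |M|, such that in every μ-forest of height at most h (for any morphism μ : Σ* → M and any nonempty word), every leaf points to at most B leaves. -/

import Mathlib

inductive Forest (A : Type) : Type
  | leaf : A → Forest A
  | node : List (Forest A) → Forest A

namespace Forest

mutual
  /-- The word spelled out by the leaves of a forest, from left to right. -/
  def word {A : Type} : Forest A → List A
    | .leaf a => [a]
    | .node l => wordList l
  def wordList {A : Type} : List (Forest A) → List A
    | [] => []
    | t :: l => t.word ++ wordList l
end

mutual
  /-- The paths (sequences of child indices, from the root) of the leaves of a forest,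
  in left-to-right order; the `i`-th entry is the path of the leaf carrying position `i`
  of `F.word`. -/
  def leafPaths {A : Type} : Forest A → List (List ℕ)
    | .leaf _ => [[]]
    | .node l => leafPathsList 0 l
  def leafPathsList {A : Type} : ℕ → List (Forest A) → List (List ℕ)
    | _, [] => []
    | n, t :: l => (t.leafPaths.map (n :: ·)) ++ leafPathsList (n + 1) l
end

def children {A : Type} : Forest A → List (Forest A)
  | .leaf _ => []
  | .node l => l

/-- The subtree of a forest at a given path, if it exists. -/
def subtreeAt? {A : Type} : Forest A → List ℕ → Option (Forest A)
  | F, [] => some F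
  | F, n :: p =>
    match F.children[n]? with
    | some t => t.subtreeAt? p
    | none => none

end Forest

/-- `IsForest μ c F` says `F` is a `μ`-forest (`c` standing for the cardinality `|M|`). -/
inductive IsForest {A M : Type} [Monoid M] (μ : List A → M) (c : ℕ) : Forest A → Prop
  | leaf (a : A) : IsForest μ c (.leaf a)
  | node (l : List (Forest A)) (h2 : 2 ≤ l.length)
      (hrec : ∀ t ∈ l, IsForest μ c t)
      (h3 : 3 ≤ l.length →
        ∃ m : M, (∀ t ∈ l, μ t.word = m) ∧ m ^ c = m ^ (c + 1)) :
      IsForest μ c (.node l)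

/-- `q` is a sibling of `p` at distance `d` in the left-to-right order of siblings
(every node is its own sibling at distance 0). -/
def SiblingAtDist (p q : List ℕ) (d : ℕ) : Prop :=
  (p = q ∧ d = 0) ∨
    ∃ (r : List ℕ) (a b : ℕ), p = r ++ [a] ∧ q = r ++ [b] ∧ (a - b) + (b - a) = d

/-- Node `p` observes node `q` when `q` is a sibling at distance at most `c` of an
ancestor of `p` (a node being its own ancestor). -/
def Observes (c : ℕ) (p q : List ℕ) : Prop :=
  ∃ r : List ℕ, r <+: p ∧ ∃ d ≤ c, SiblingAtDist r q d

/-- A node is iterable when it has at least `c` left siblings and at least `c` right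
siblings (not counting itself). -/
def Iterable {A : Type} (F : Forest A) (c : ℕ) (p : List ℕ) : Prop :=
  ∃ (r : List ℕ) (a : ℕ), p = r ++ [a] ∧ c ≤ a ∧
    ∃ t, F.subtreeAt? r = some t ∧ a + c + 1 ≤ t.children.length

/-- `anc` is the anchor of the leaf with path `lf`: its lowest iterable ancestor if one
exists, and otherwise the root. -/
def IsAnchor {A : Type} (F : Forest A) (c : ℕ) (lf anc : List ℕ) : Prop :=
  (anc <+: lf ∧ Iterable F c anc ∧
    ∀ q, q <+: lf → Iterable F c q → q.length ≤ anc.length)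
  ∨ ((∀ q, q <+: lf → ¬ Iterable F c q) ∧ anc = [])

/-- The leaf carrying position `i` points to the leaf carrying position `j`:
the anchor of the former observes the anchor of the latter. -/
def PointsTo {A : Type} (F : Forest A) (c : ℕ) (i j : ℕ) : Prop :=
  ∃ pi pj ai aj, F.leafPaths[i]? = some pi ∧ F.leafPaths[j]? = some pj ∧
    IsAnchor F c pi ai ∧ IsAnchor F c pj aj ∧ Observes c ai aj

namespace Forest
mutual
  /-- The height of a forest: maximal nesting depth of internal nodes; a leaf has height 0. -/
  def height {A : Type} : Forest A → ℕ
    | .leaf _ => 0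
    | .node l => heightList l + 1
  def heightList {A : Type} : List (Forest A) → ℕ
    | [] => 0
    | t :: l => max t.height (heightList l)
end
end Forest

/-!
If leaf `i` points to leaf `j`, the anchor of `j` is a sibling at distance at most `|M|` of one of
the at most `h + 1` ancestors of `i`, which leaves at most `(h + 1)(2|M| + 2)` possibilities for
it. Between its anchor and leaf `j`, the path to `j` only meets non-iterable nodes, i.e. nodes among
the first or the last `|M|` children of their parent; as the path has at most `h` steps, a given
anchor is the anchor of at most `(2|M| + 1)^h` leaves. Since distinct leaves have distinct paths,
`B = (h + 1)(2|M| + 2)(2|M| + 1)^h` works.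
-/

namespace Forest

variable {A : Type}

lemma mem_leafPathsList (l : List (Forest A)) (n : ℕ) (p : List ℕ) :
    p ∈ leafPathsList n l ↔
      ∃ k, ∃ hk : k < l.length, ∃ p', p = (n + k) :: p' ∧ p' ∈ l[k].leafPaths := by
  induction l generalizing n with
  | nil => simp [leafPathsList]
  | cons t l ih =>
    simp only [leafPathsList, List.mem_append, List.mem_map, ih]
    constructor
    · rintro (⟨p', hp', rfl⟩ | ⟨k, hk, p', rfl, hp'⟩)
      · exact ⟨0, by simp, p', by simp, hp'⟩
      · exact ⟨k + 1, by simpa using hk, p', by simp; omega, by simpa using hp'⟩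
    · rintro ⟨_ | k, hk, p', rfl, hp'⟩
      · exact Or.inl ⟨p', by simpa using hp', by simp⟩
      · exact Or.inr ⟨k, by simpa using hk, p', by simp; omega, by simpa using hp'⟩

lemma height_le_heightList {l : List (Forest A)} {t : Forest A} (ht : t ∈ l) :
    t.height ≤ heightList l := by
  induction l with
  | nil => simp at ht
  | cons s l ih =>
    rw [heightList]
    rcases List.mem_cons.1 ht with rfl | ht
    · exact le_max_left _ _
    · exact (ih ht).trans (le_max_right _ _)

lemma length_le_height_of_mem_leafPaths (F : Forest A) :
    ∀ p ∈ F.leafPaths, p.length ≤ F.height := by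
  induction F using Forest.rec
    (motive_2 := fun l => ∀ t ∈ l, ∀ p ∈ t.leafPaths, p.length ≤ t.height) with
  | leaf a => simp [leafPaths, height]
  | node l ih =>
    intro p hp
    obtain ⟨k, hk, p', rfl, hp'⟩ := (mem_leafPathsList l 0 p).1 hp
    have := (ih _ (l.getElem_mem hk) p' hp').trans (height_le_heightList (l.getElem_mem hk))
    simpa [height] using this
  | nil => simp_all
  | cons t l ih₁ ih₂ =>
    rename_i s hs p hp
    rcases List.mem_cons.1 hs with rfl | hs
    exacts [ih₁ p hp, ih₂ s hs p hp]

lemma exists_subtreeAt?_of_mem_leafPaths (F : Forest A) :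
    ∀ p ∈ F.leafPaths, ∀ q a, q ++ [a] <+: p →
      ∃ t, F.subtreeAt? q = some t ∧ a < t.children.length := by
  induction F using Forest.rec
    (motive_2 := fun l => ∀ t ∈ l, ∀ p ∈ t.leafPaths, ∀ q a, q ++ [a] <+: p →
      ∃ s, t.subtreeAt? q = some s ∧ a < s.children.length) with
  | leaf a =>
    intro p hp q b hq
    simp only [leafPaths, List.mem_singleton] at hp
    simp [hp] at hq
  | node l ih =>
    intro p hp q a hq
    obtain ⟨k, hk, p', rfl, hp'⟩ := (mem_leafPathsList l 0 p).1 hp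
    obtain ⟨u, hu⟩ := hq
    cases q with
    | nil =>
      obtain ⟨rfl, -⟩ : a = k ∧ u = p' := by simpa using hu
      exact ⟨.node l, rfl, by simpa [children] using hk⟩
    | cons b q =>
      obtain ⟨rfl, hq⟩ : b = k ∧ q ++ [a] ++ u = p' := by simpa using hu
      obtain ⟨s, hs, ha⟩ := ih _ (l.getElem_mem hk) p' hp' q a ⟨u, hq⟩
      exact ⟨s, by simpa [subtreeAt?, children, List.getElem?_eq_getElem hk] using hs, ha⟩
  | nil => simp_all
  | cons t l ih₁ ih₂ =>
    rename_i s hs p hp q a hq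
    rcases List.mem_cons.1 hs with rfl | hs
    exacts [ih₁ p hp q a hq, ih₂ s hs p hp q a hq]

lemma nodup_leafPaths (F : Forest A) : F.leafPaths.Nodup := by
  induction F using Forest.rec
    (motive_2 := fun l => ∀ n, (leafPathsList n l).Nodup) with
  | leaf a => simp [leafPaths]
  | node l ih => exact ih 0
  | nil => simp [leafPathsList]
  | cons t l ih₁ ih₂ =>
    rename_i n
    refine (ih₁.map fun _ _ h => List.cons_injective h).append (ih₂ (n + 1)) ?_
    rintro _ hx hy
    obtain ⟨p', -, rfl⟩ := List.mem_map.1 hx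
    obtain ⟨k, -, p'', h, -⟩ := (mem_leafPathsList l (n + 1) _).1 hy
    simp only [List.cons.injEq] at h
    omega

end Forest

lemma List.Nodup.ncard_le_card_of_getElem?_mem {α : Type*} [DecidableEq α] {l : List α}
    (hl : l.Nodup) {S : Set ℕ} {T : Finset α} (hS : ∀ j ∈ S, ∃ a ∈ T, l[j]? = some a) :
    S.ncard ≤ T.card := by
  have hmaps : ∀ j ∈ S, l[j]? ∈ (T.image some : Set (Option α)) := by
    intro j hj
    obtain ⟨a, ha, hja⟩ := hS j hj
    simpa [hja] using ha
  have hinj : Set.InjOn (fun j => l[j]?) S := by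
    intro j₁ hj₁ j₂ _ h
    obtain ⟨a, -, ha⟩ := hS j₁ hj₁
    exact (List.getElem?_inj (List.getElem?_eq_some_iff.1 ha).1 hl).1 h
  calc S.ncard ≤ (T.image some : Set (Option α)).ncard :=
        Set.ncard_le_ncard_of_injOn _ hmaps hinj (Finset.finite_toSet _)
    _ ≤ T.card := by rw [Set.ncard_coe_finset]; exact Finset.card_image_le

namespace Forest

open Finset

variable {A : Type}

def numChildrenAt (F : Forest A) (p : List ℕ) : ℕ :=
  match F.subtreeAt? p with
  | some t => t.children.length
  | none => 0

/-- The positions of the non-iterable ones among `n` siblings. -/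
def boundaryIndices (c n : ℕ) : Finset ℕ :=
  range c ∪ (range c).image (n - c + ·)

lemma card_boundaryIndices_le (c n : ℕ) : #(boundaryIndices c n) ≤ 2 * c :=
  (card_union_le _ _).trans <| by
    rw [two_mul, card_range]
    exact Nat.add_le_add_left (card_image_le.trans (card_range c).le) c

lemma mem_boundaryIndices {c n a : ℕ} (ha : a < n) (hna : ¬ (c ≤ a ∧ a + c + 1 ≤ n)) :
    a ∈ boundaryIndices c n := by
  simp only [boundaryIndices, mem_union, mem_range, mem_image]
  by_cases hac : a < c
  · exact Or.inl hac
  · exact Or.inr ⟨a - (n - c), by omega, by omega⟩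

def boundaryDescendants (F : Forest A) (c : ℕ) : ℕ → List ℕ → Finset (List ℕ)
  | 0, p => {p}
  | k + 1, p => insert p <| (boundaryIndices c (F.numChildrenAt p)).biUnion
      fun a => boundaryDescendants F c k (p ++ [a])

lemma card_boundaryDescendants_le (F : Forest A) (c k : ℕ) (p : List ℕ) :
    #(F.boundaryDescendants c k p) ≤ (2 * c + 1) ^ k := by
  induction k generalizing p with
  | zero => simp [boundaryDescendants]
  | succ k ih =>
    have hchildren := card_biUnion_le_card_mul (boundaryIndices c (F.numChildrenAt p))
      (fun a => F.boundaryDescendants c k (p ++ [a])) _ fun a _ => ih (p ++ [a])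
    calc #(F.boundaryDescendants c (k + 1) p)
        ≤ 2 * c * (2 * c + 1) ^ k + 1 := by
          refine (card_insert_le _ _).trans (Nat.succ_le_succ (hchildren.trans ?_))
          exact Nat.mul_le_mul_right _ (card_boundaryIndices_le c _)
      _ ≤ (2 * c + 1) ^ (k + 1) := by
          rw [pow_succ]
          nlinarith [Nat.one_le_pow k (2 * c + 1) (by omega)]

lemma append_mem_boundaryDescendants (F : Forest A) (c k : ℕ) (p s : List ℕ)
    (hs : s.length ≤ k)
    (hsteps : ∀ s₁ a, s₁ ++ [a] <+: s → a ∈ boundaryIndices c (F.numChildrenAt (p ++ s₁))) :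
    p ++ s ∈ F.boundaryDescendants c k p := by
  induction k generalizing p s with
  | zero =>
    obtain rfl : s = [] := List.length_eq_zero_iff.1 (Nat.le_zero.1 hs)
    simp [boundaryDescendants]
  | succ k ih =>
    cases s with
    | nil => simp [boundaryDescendants]
    | cons a s =>
      refine mem_insert_of_mem (mem_biUnion.2 ⟨a, by simpa using hsteps [] a ⟨s, rfl⟩, ?_⟩)
      simpa using ih (p ++ [a]) s (by simpa using hs) fun s₁ b hb => by
        simpa using hsteps (a :: s₁) b (by simpa using hb)

/-- Contains the siblings of `r` at distance at most `c`, and possibly a few more nodes because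
of truncated subtraction. -/
def siblingsWithin (c : ℕ) (r : List ℕ) : Finset (List ℕ) :=
  insert r ((range (2 * c + 1)).image fun i => r.dropLast ++ [r.getLastD 0 + i - c])

lemma card_siblingsWithin_le (c : ℕ) (r : List ℕ) : #(siblingsWithin c r) ≤ 2 * c + 2 :=
  (card_insert_le _ _).trans (Nat.succ_le_succ (card_image_le.trans (card_range _).le))

lemma mem_siblingsWithin {c d : ℕ} {r q : List ℕ} (hsib : SiblingAtDist r q d) (hd : d ≤ c) :
    q ∈ siblingsWithin c r := by
  rcases hsib with ⟨rfl, -⟩ | ⟨u, a, b, rfl, rfl, rfl⟩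
  · exact mem_insert_self _ _
  · refine mem_insert_of_mem (mem_image.2 ⟨c + b - a, mem_range.2 (by omega), ?_⟩)
    simp only [List.dropLast_concat, List.getLastD_concat, List.append_cancel_left_eq,
      List.cons.injEq, and_true]
    omega

def observableFrom (c : ℕ) (p : List ℕ) : Finset (List ℕ) :=
  p.inits.toFinset.biUnion (siblingsWithin c)

lemma card_observableFrom_le (c : ℕ) (p : List ℕ) :
    #(observableFrom c p) ≤ (p.length + 1) * (2 * c + 2) :=
  (card_biUnion_le_card_mul _ _ _ fun r _ => card_siblingsWithin_le c r).trans
    (Nat.mul_le_mul_right _ ((List.toFinset_card_le _).trans (List.length_inits p).le))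

lemma mem_observableFrom {c : ℕ} {p a b : List ℕ} (hap : a <+: p) (hab : Observes c a b) :
    b ∈ observableFrom c p := by
  obtain ⟨r, hra, d, hd, hsib⟩ := hab
  exact mem_biUnion.2 ⟨r, List.mem_toFinset.2 ((List.mem_inits _ _).2 (hra.trans hap)),
    mem_siblingsWithin hsib hd⟩

def pointingCandidates (F : Forest A) (c h : ℕ) (p : List ℕ) : Finset (List ℕ) :=
  (observableFrom c p).biUnion (F.boundaryDescendants c h)

lemma card_pointingCandidates_le (F : Forest A) (c h : ℕ) (p : List ℕ) :
    #(F.pointingCandidates c h p) ≤ (p.length + 1) * (2 * c + 2) * (2 * c + 1) ^ h :=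
  (card_biUnion_le_card_mul _ _ _ fun q _ => F.card_boundaryDescendants_le c h q).trans
    (Nat.mul_le_mul_right _ (card_observableFrom_le c p))

end Forest

namespace IsAnchor

variable {A : Type} {F : Forest A} {c : ℕ} {lf anc : List ℕ}

lemma isPrefix (h : IsAnchor F c lf anc) : anc <+: lf := by
  rcases h with ⟨h, -⟩ | ⟨-, rfl⟩
  exacts [h, List.nil_prefix]

lemma not_iterable (h : IsAnchor F c lf anc) {q : List ℕ} (hq : q <+: lf)
    (hlen : anc.length < q.length) : ¬ Iterable F c q := by
  rcases h with ⟨-, -, hmin⟩ | ⟨hall, -⟩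
  · exact fun hit => absurd (hmin q hq hit) (by omega)
  · exact hall q hq

lemma mem_boundaryDescendants {h : ℕ} (hlf : lf ∈ F.leafPaths) (hanc : IsAnchor F c lf anc)
    (hF : F.height ≤ h) : lf ∈ F.boundaryDescendants c h anc := by
  obtain ⟨s, rfl⟩ := hanc.isPrefix
  refine Forest.append_mem_boundaryDescendants F c h anc s ?_ fun s₁ a hpre => ?_
  · have := (F.length_le_height_of_mem_leafPaths _ hlf).trans hF
    simp only [List.length_append] at this
    omega
  · have hstep : anc ++ s₁ ++ [a] <+: anc ++ s := by
      simpa using (List.prefix_append_right_inj anc).2 hpre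
    obtain ⟨t, ht, ha⟩ := F.exists_subtreeAt?_of_mem_leafPaths _ hlf _ a hstep
    have hnot := hanc.not_iterable hstep (by simp)
    rw [Forest.numChildrenAt, ht]
    exact Forest.mem_boundaryIndices ha fun ⟨hca, hac⟩ => hnot ⟨_, a, rfl, hca, t, ht, hac⟩

end IsAnchor

lemma PointsTo.exists_mem_pointingCandidates {A : Type} {F : Forest A} {c h i j : ℕ}
    (hij : PointsTo F c i j) (hi : i < F.leafPaths.length) (hF : F.height ≤ h) :
    ∃ pj ∈ F.pointingCandidates c h F.leafPaths[i], F.leafPaths[j]? = some pj := by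
  obtain ⟨pi, pj, ai, aj, hpi, hpj, hai, haj, hobs⟩ := hij
  obtain rfl : F.leafPaths[i] = pi := by simpa [List.getElem?_eq_getElem hi] using hpi
  have hpj_mem : pj ∈ F.leafPaths := List.mem_of_getElem? hpj
  exact ⟨pj, Finset.mem_biUnion.2 ⟨aj, Forest.mem_observableFrom hai.isPrefix hobs,
    haj.mem_boundaryDescendants hpj_mem hF⟩, hpj⟩

theorem stmt9 {M : Type} [Monoid M] [Fintype M] (h : ℕ) :
    ∃ B : ℕ, ∀ (A : Type) (μ : List A → M) (F : Forest A),
      IsForest μ (Fintype.card M) F → F.height ≤ h →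
      ∀ i : ℕ, i < F.leafPaths.length →
        Set.ncard {j : ℕ | PointsTo F (Fintype.card M) i j} ≤ B := by
  set c := Fintype.card M
  refine ⟨(h + 1) * (2 * c + 2) * (2 * c + 1) ^ h, fun A _ F _ hF i hi => ?_⟩
  have hlen : F.leafPaths[i].length ≤ h :=
    (F.length_le_height_of_mem_leafPaths _ (List.getElem_mem hi)).trans hF
  calc Set.ncard {j : ℕ | PointsTo F c i j}
      ≤ (F.pointingCandidates c h F.leafPaths[i]).card :=
        F.nodup_leafPaths.ncard_le_card_of_getElem?_mem fun j hj =>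
          PointsTo.exists_mem_pointingCandidates hj hi hF
    _ ≤ (F.leafPaths[i].length + 1) * (2 * c + 2) * (2 * c + 1) ^ h :=
        F.card_pointingCandidates_le c h _
    _ ≤ (h + 1) * (2 * c + 2) * (2 * c + 1) ^ h := by gcongr
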